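/- arXiv:2407.09891 — 2 statements merged into one kernel-verified Lean document; each statement's English description precedes it below -/
import Mathlib

section
/- Let M be an NFA over a finite alphabet Σ with finite state set Q. Then for every subset J ⊆ Σ, the number of accessible states of the DFA produced by the subset construction satisfies |Reach(M)| ≤ (1 + Σ_{a ∈ Σ∖J} |Set.range T_a|) · |M(J)|. In particular, |Reach(M)| is at most the subset complexity ‖M‖ = min_{J ⊆ Σ} (1 + Σ_{a ∈ Σ∖J} |Set.range T_a|) · |M(J)|. -/
/-- For an NFA `M` over a finite alphabet `α` with finite state set `σ`,
for every subset `J` of the alphabet, the number of accessible states of the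
subset-construction DFA is bounded by
`(1 + ∑_{a ∉ J} |Set.range T_a|) * |M(J)|`, where `T_a S = M.stepSet S a` and `M(J)` is
the transition monoid generated by `{T_a | a ∈ J}`.  In particular it is bounded by
the subset complexity, the minimum of this quantity over all `J ⊆ Σ`. -/
theorem subset_construction_subset_complexity_bound
    {α σ : Type} [Fintype α] [DecidableEq α] [Fintype σ] (M : NFA α σ) :
    (∀ J : Finset α,
      (Set.range fun w : List α => M.evalFrom M.start w).ncard ≤
        (1 + ∑ a ∈ Jᶜ, (Set.range fun S : Set σ => M.stepSet S a).ncard) *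
          Nat.card (Submonoid.closure
            { f : Function.End (Set σ) | ∃ a ∈ J, f = fun S => M.stepSet S a })) ∧
    (Set.range fun w : List α => M.evalFrom M.start w).ncard ≤
      ⨅ J : Finset α,
        (1 + ∑ a ∈ Jᶜ, (Set.range fun S : Set σ => M.stepSet S a).ncard) *
          Nat.card (Submonoid.closure
            { f : Function.End (Set σ) | ∃ a ∈ J, f = fun S => M.stepSet S a }) := by
  classical
  haveI : Finite (Function.End (Set σ)) := inferInstanceAs (Finite (Set σ → Set σ))
  have main : ∀ J : Finset α,
      (Set.range fun w : List α => M.evalFrom M.start w).ncard ≤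
        (1 + ∑ a ∈ Jᶜ, (Set.range fun S : Set σ => M.stepSet S a).ncard) *
          Nat.card (Submonoid.closure
            { f : Function.End (Set σ) | ∃ a ∈ J, f = fun S => M.stepSet S a }) := by
    intro J
    set T : α → Function.End (Set σ) := fun a S => M.stepSet S a with hT
    set N := Submonoid.closure
      { f : Function.End (Set σ) | ∃ a ∈ J, f = fun S => M.stepSet S a } with hN
    let X : Type := Σ a : {a : α // a ∈ Jᶜ}, (Set.range fun S : Set σ => M.stepSet S a.1)
    let Φ : Option X × N → Set σ := fun p =>
      (p.2 : Function.End (Set σ)) (Option.elim p.1 M.start (fun x => (x.2 : Set σ)))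
    have hsub : (Set.range fun w : List α => M.evalFrom M.start w) ⊆ Set.range Φ := by
      rintro _ ⟨w, rfl⟩
      induction w using List.reverseRecOn with
      | nil => exact ⟨(none, 1), rfl⟩
      | append_singleton w a ih =>
        obtain ⟨⟨o, m⟩, hm⟩ := ih
        show M.evalFrom M.start (w ++ [a]) ∈ Set.range Φ
        rw [NFA.evalFrom_append, NFA.evalFrom_singleton]
        by_cases ha : a ∈ J
        · have hTa : T a ∈ N := Submonoid.subset_closure ⟨a, ha, rfl⟩
          refine ⟨(o, ⟨T a * m.1, mul_mem hTa m.2⟩), ?_⟩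
          show (T a) ((m : Function.End (Set σ)) _) = _
          rw [show (m : Function.End (Set σ)) (Option.elim o M.start
              (fun x => (x.2 : Set σ))) = M.evalFrom M.start w from hm]
        · refine ⟨(some ⟨⟨a, by simpa using ha⟩,
            ⟨M.stepSet (M.evalFrom M.start w) a, ⟨M.evalFrom M.start w, rfl⟩⟩⟩, 1), rfl⟩
    have h1 : (Set.range fun w : List α => M.evalFrom M.start w).ncard ≤
        (Set.range Φ).ncard :=
      Set.ncard_le_ncard hsub (Set.toFinite _)
    have h2 : (Set.range Φ).ncard ≤ Nat.card (Option X × N) := by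
      rw [← Nat.card_coe_set_eq]
      exact Finite.card_range_le Φ
    have h3 : Nat.card (Option X × N) =
        (1 + ∑ a ∈ Jᶜ, (Set.range fun S : Set σ => M.stepSet S a).ncard) * Nat.card N := by
      rw [Nat.card_prod, Finite.card_option]
      congr 1
      have hX : Nat.card X = ∑ a ∈ Jᶜ, (Set.range fun S : Set σ => M.stepSet S a).ncard := by
        rw [Nat.card_eq_fintype_card, Fintype.card_sigma]
        rw [← Finset.sum_coe_sort (Jᶜ)
          (fun a => (Set.range fun S : Set σ => M.stepSet S a).ncard)]
        refine Finset.sum_congr rfl fun a _ => ?_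
        rw [← Nat.card_coe_set_eq, Nat.card_eq_fintype_card]
      omega
    exact h1.trans (h2.trans_eq h3)
  exact ⟨main, le_ciInf main⟩
end

section
/- Let M be an NFA over a finite alphabet Σ with finite state set Q that is trim (every state is accessible and co-accessible) and co-deterministic (accept is a singleton, and for every state q ∈ Q and symbol a ∈ Σ there is exactly one state p with q ∈ step p a). Then any two distinct accessible subsets S₁ ≠ S₂ ∈ Reach(M) have distinct right languages, i.e., there is a word w such that exactly one of (evalFrom S₁ w ∩ accept) and (evalFrom S₂ w ∩ accept) is nonempty; consequently every complete DFA accepting accepts(M) has at least |Reach(M)| states, i.e., the subset construction produces the minimal equivalent DFA. -/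
open Set

lemma nfa_evalFrom_mono {α σ : Type} (M : NFA α σ) {S T : Set σ} (h : S ⊆ T)
    (w : List α) : M.evalFrom S w ⊆ M.evalFrom T w := by
  induction w generalizing S T with
  | nil => simpa using h
  | cons a w ih =>
    have : M.stepSet S a ⊆ M.stepSet T a := by
      intro x hx
      rw [NFA.mem_stepSet] at hx ⊢
      obtain ⟨s, hs, hx⟩ := hx
      exact ⟨s, h hs, hx⟩
    simpa [NFA.evalFrom] using ih this

lemma nfa_mem_evalFrom_exists {α σ : Type} (M : NFA α σ) {S : Set σ} {x : σ}
    (w : List α) (hx : x ∈ M.evalFrom S w) : ∃ p ∈ S, x ∈ M.evalFrom {p} w := by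
  induction w generalizing S with
  | nil => exact ⟨x, by simpa using hx, by simp⟩
  | cons a w ih =>
    have hx' : x ∈ M.evalFrom (M.stepSet S a) w := hx
    obtain ⟨y, hy, hxy⟩ := ih hx'
    rw [NFA.mem_stepSet] at hy
    obtain ⟨p, hp, hyp⟩ := hy
    refine ⟨p, hp, ?_⟩
    have hsub : ({y} : Set σ) ⊆ M.stepSet {p} a := by
      intro z hz; rw [Set.mem_singleton_iff] at hz; subst hz
      rw [NFA.mem_stepSet]; exact ⟨p, rfl, hyp⟩
    exact nfa_evalFrom_mono M hsub w hxy

lemma nfa_evalFrom_append' {α σ : Type} (M : NFA α σ) (S : Set σ) (x y : List α) :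
    M.evalFrom S (x ++ y) = M.evalFrom (M.evalFrom S x) y := by
  simp [NFA.evalFrom, List.foldl_append]

lemma nfa_codet_unique {α σ : Type} (M : NFA α σ)
    (h_codet : ∀ (q : σ) (a : α), ∃! p : σ, q ∈ M.step p a)
    (w : List α) : ∀ {x q q' : σ}, x ∈ M.evalFrom {q} w → x ∈ M.evalFrom {q'} w → q = q' := by
  induction w using List.reverseRecOn with
  | nil => intro x q q' h h'; simp [NFA.evalFrom_nil] at h h'; rw [← h, ← h']
  | append_singleton w a ih =>
    intro x q q' h h'
    rw [NFA.evalFrom_append, NFA.evalFrom_singleton, NFA.mem_stepSet] at h h'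
    obtain ⟨y, hy, hxy⟩ := h
    obtain ⟨y', hy', hxy'⟩ := h'
    obtain ⟨p, _, hp⟩ := h_codet x a
    have : y = y' := (hp y hxy).trans (hp y' hxy').symm
    subst this
    exact ih hy hy'

/-- Brzozowski: if an NFA `M` over a finite alphabet with finite state set
is trim (every state accessible and co-accessible) and co-deterministic (`accept` is a
singleton and every state has exactly one incoming `a`-transition for each symbol `a`),
then distinct accessible subsets of the subset construction have distinct right
languages, and consequently every complete DFA accepting `M.accepts` has at least as
many states as the subset automaton: the subset construction is minimal. -/
theorem brzozowski_codeterministic_minimal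
    {α σ : Type} [Fintype α] [Fintype σ] (M : NFA α σ)
    (h_accessible : ∀ q : σ, ∃ w : List α, q ∈ M.evalFrom M.start w)
    (h_coaccessible : ∀ q : σ, ∃ w : List α, (M.evalFrom {q} w ∩ M.accept).Nonempty)
    (h_accept_single : ∃ qf : σ, M.accept = {qf})
    (h_codet : ∀ (q : σ) (a : α), ∃! p : σ, q ∈ M.step p a) :
    (∀ S₁ ∈ Set.range (fun w : List α => M.evalFrom M.start w),
      ∀ S₂ ∈ Set.range (fun w : List α => M.evalFrom M.start w),
        S₁ ≠ S₂ → ∃ w : List α,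
          Xor' (M.evalFrom S₁ w ∩ M.accept).Nonempty
               (M.evalFrom S₂ w ∩ M.accept).Nonempty) ∧
    (∀ (Q' : Type) [Fintype Q'] (D : DFA α Q'), D.accepts = M.accepts →
      (Set.range fun w : List α => M.evalFrom M.start w).ncard ≤ Fintype.card Q') := by
  classical
  -- key separation lemma
  have key : ∀ S₁ S₂ : Set σ, S₁ ≠ S₂ → ∃ w : List α,
        Xor' (M.evalFrom S₁ w ∩ M.accept).Nonempty
             (M.evalFrom S₂ w ∩ M.accept).Nonempty := by
    have main : ∀ S₁ S₂ : Set σ, ∀ q, q ∈ S₁ → q ∉ S₂ → ∃ w : List α,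
        Xor' (M.evalFrom S₁ w ∩ M.accept).Nonempty
             (M.evalFrom S₂ w ∩ M.accept).Nonempty := by
      intro S₁ S₂ q hq₁ hq₂
      obtain ⟨w, x, hx, hxacc⟩ := h_coaccessible q
      refine ⟨w, Or.inl ⟨⟨x, nfa_evalFrom_mono M (by simpa using hq₁) w hx, hxacc⟩, ?_⟩⟩
      rintro ⟨y, hy, hyacc⟩
      obtain ⟨p, hp, hyp⟩ := nfa_mem_evalFrom_exists M w hy
      obtain ⟨qf, hqf⟩ := h_accept_single
      rw [hqf, Set.mem_singleton_iff] at hxacc hyacc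
      subst hxacc; subst hyacc
      exact hq₂ ((nfa_codet_unique M h_codet w hx hyp) ▸ hp)
    intro S₁ S₂ hne
    by_cases h : S₁ ⊆ S₂
    · have h2 : ¬S₂ ⊆ S₁ := fun h2 => hne (Set.Subset.antisymm h h2)
      obtain ⟨q, hq₂, hq₁⟩ := Set.not_subset.mp h2
      obtain ⟨w, hw⟩ := main S₂ S₁ q hq₂ hq₁
      exact ⟨w, hw.symm⟩
    · obtain ⟨q, hq₁, hq₂⟩ := Set.not_subset.mp h
      exact main S₁ S₂ q hq₁ hq₂
  constructor
  · intro S₁ _ S₂ _ hne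
    exact key S₁ S₂ hne
  · intro Q' _ D hD
    set R := Set.range fun w : List α => M.evalFrom M.start w with hR
    -- choose for each S in R a word
    have hchoice : ∀ S ∈ R, ∃ w : List α, M.evalFrom M.start w = S := by
      rintro S ⟨w, rfl⟩; exact ⟨w, rfl⟩
    choose wit hwit using hchoice
    have hRfin : R.Finite := Set.toFinite R
    -- injection from R to Q'
    have hinj : Set.InjOn (fun S => if h : S ∈ R then D.eval (wit S h) else D.eval []) R := by
      intro S₁ h₁ S₂ h₂ heq
      simp only [dif_pos h₁, dif_pos h₂] at heq
      by_contra hne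
      obtain ⟨z, hz⟩ := key S₁ S₂ hne
      have hlang : ∀ (w : List α), (M.evalFrom (M.evalFrom M.start w) z ∩ M.accept).Nonempty
          ↔ D.evalFrom (D.eval w) z ∈ D.accept := by
        intro w
        have h1 : (w ++ z) ∈ M.accepts ↔ (w ++ z) ∈ D.accepts := by rw [hD]
        rw [NFA.mem_accepts, DFA.mem_accepts] at h1
        rw [show D.eval (w ++ z) = D.evalFrom (D.eval w) z from DFA.evalFrom_of_append D D.start w z] at h1
        rw [← h1]
        constructor
        · rintro ⟨x, hx1, hx2⟩
          exact ⟨x, hx2, by rw [nfa_evalFrom_append' M M.start w z]; exact hx1⟩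
        · rintro ⟨x, hx1, hx2⟩
          rw [nfa_evalFrom_append' M M.start w z] at hx2
          exact ⟨x, hx2, hx1⟩
      have e₁ := hlang (wit S₁ h₁)
      have e₂ := hlang (wit S₂ h₂)
      rw [hwit S₁ h₁] at e₁
      rw [hwit S₂ h₂] at e₂
      rw [heq] at e₁
      rcases hz with ⟨ha, hb⟩ | ⟨ha, hb⟩
      · exact hb (e₂.mpr (e₁.mp ha))
      · exact hb (e₂.mp ha |> (e₁.mpr))
    have h1 : (Set.image (fun S => if h : S ∈ R then D.eval (wit S h) else D.eval []) R).ncard = R.ncard :=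
      Set.ncard_image_of_injOn hinj
    calc R.ncard = _ := h1.symm
      _ ≤ (Set.univ : Set Q').ncard := Set.ncard_le_ncard (Set.subset_univ _) Set.finite_univ
      _ = Fintype.card Q' := by simp [Set.ncard_univ, Nat.card_eq_fintype_card]
end
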